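/- arXiv:1707.06143 — 4 statements merged into one kernel-verified Lean document; each statement's English description precedes it below -/
import Mathlib

section
/- Let G be a dense additive subgroup of ℝ containing ℤ, 𝔾 = G ∩ [0,1) with addition modulo 1. Then for every integer n ≥ 2, the index [𝔾 : n𝔾] satisfies [𝔾 : n𝔾] ≤ [G : nG] ≤ n·[𝔾 : n𝔾]. -/
/-!
Reduction modulo `ℤ` is a surjection `π : G → 𝔾` with kernel `ℤ = ⟨1⟩`. It induces a surjection
`G / nG → 𝔾 / n𝔾`, which gives the first inequality. An element of its kernel is the class of some
`x ∈ G` with `π x = n • π y`, so `x - n y ∈ ℤ` and `x ≡ k·1 mod nG`; hence the kernel is generated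
by the class of `1`, which is killed by `n`, and has at most `n` elements.
-/

/-- The multiplication-by-`n` endomorphism of an additive commutative group. -/
def smulHom (A : Type*) [AddCommGroup A] (n : ℕ) : A →+ A :=
  AddMonoidHom.mk' (fun a => n • a) (fun a b => smul_add n a b)

open Cardinal

universe u

theorem Cardinal.mk_le_mk_mul_mk_ker {M N : Type u} [AddGroup M] [AddGroup N] (f : M →+ N) :
    #M ≤ #N * #f.ker :=
  calc #M = #(M ⧸ f.ker) * #f.ker := by
        rw [mk_congr AddSubgroup.addGroupEquivQuotientProdAddSubgroup, mk_prod, lift_id, lift_id]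
    _ ≤ #N * #f.ker := by
        gcongr
        exact mk_le_of_injective (QuotientAddGroup.kerLift_injective f)

theorem Cardinal.mk_zmultiples_le_of_nsmul_eq_zero {M : Type u} [AddGroup M] {x : M} {n : ℕ}
    (hn : 0 < n) (hx : n • x = 0) : #(AddSubgroup.zmultiples x) ≤ n := by
  have hfin : IsOfFinAddOrder x := isOfFinAddOrder_iff_nsmul_eq_zero.2 ⟨n, hn, hx⟩
  have : Finite (AddSubgroup.zmultiples x) := hfin.finite_zmultiples
  rw [← Nat.cast_card, Nat.card_zmultiples]
  exact_mod_cast addOrderOf_le_of_nsmul_eq_zero hn hx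

theorem AddSubgroup.map_smulHom_addSubgroupOf {A : Type*} [AddCommGroup A] (G : AddSubgroup A)
    (n : ℕ) : (G.map (smulHom A n)).addSubgroupOf G = (smulHom G n).range := by
  ext x
  simp only [AddSubgroup.mem_addSubgroupOf, AddSubgroup.mem_map, AddMonoidHom.mem_range]
  constructor
  · rintro ⟨y, hy, hyx⟩
    exact ⟨⟨y, hy⟩, Subtype.ext hyx⟩
  · rintro ⟨y, rfl⟩
    exact ⟨y, y.2, rfl⟩

theorem ker_addSubgroupMap_mk'_zmultiples_le {A : Type*} [AddCommGroup A] (G : AddSubgroup A)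
    {z : A} (hz : z ∈ G) :
    ((QuotientAddGroup.mk' (AddSubgroup.zmultiples z)).addSubgroupMap G).ker ≤
      AddSubgroup.zmultiples (⟨z, hz⟩ : G) := by
  intro g hg
  have hg' : (g : A) ∈ AddSubgroup.zmultiples z :=
    (QuotientAddGroup.eq_zero_iff _).1 (congrArg Subtype.val hg)
  obtain ⟨k, hk⟩ := AddSubgroup.mem_zmultiples_iff.1 hg'
  exact AddSubgroup.mem_zmultiples_iff.2 ⟨k, Subtype.ext hk⟩

section QuotientSmul

variable {A B : Type u} [AddCommGroup A] [AddCommGroup B] (f : A →+ B) (n : ℕ)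

theorem smulHom_range_le_comap : (smulHom A n).range ≤ (smulHom B n).range.comap f := by
  rintro _ ⟨y, rfl⟩
  exact ⟨f y, (map_nsmul f n y).symm⟩

def quotientSmulMap : A ⧸ (smulHom A n).range →+ B ⧸ (smulHom B n).range :=
  QuotientAddGroup.map _ _ f (smulHom_range_le_comap f n)

variable {f}

theorem quotientSmulMap_surjective (hf : Function.Surjective f) :
    Function.Surjective (quotientSmulMap f n) :=
  QuotientAddGroup.map_surjective_of_surjective _ _ f ((QuotientAddGroup.mk_surjective).comp hf) _

theorem ker_quotientSmulMap_le {z : A} (hf : Function.Surjective f)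
    (hz : f.ker ≤ AddSubgroup.zmultiples z) :
    (quotientSmulMap f n).ker ≤ AddSubgroup.zmultiples (z : A ⧸ (smulHom A n).range) := by
  intro c hc
  obtain ⟨x, rfl⟩ := QuotientAddGroup.mk_surjective c
  obtain ⟨b, hb⟩ := (QuotientAddGroup.eq_zero_iff _).1 hc
  obtain ⟨y, rfl⟩ := hf b
  have hker : x - n • y ∈ f.ker := by
    rw [AddMonoidHom.mem_ker, map_sub, map_nsmul]
    exact sub_eq_zero.2 hb.symm
  obtain ⟨k, hk⟩ := AddSubgroup.mem_zmultiples_iff.1 (hz hker)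
  refine AddSubgroup.mem_zmultiples_iff.2 ⟨k, ?_⟩
  rw [← QuotientAddGroup.mk_zsmul, hk, QuotientAddGroup.eq_iff_sub_mem]
  simpa using ⟨y, rfl⟩

theorem mk_quotient_smulHom_range_le_of_surjective (hf : Function.Surjective f) :
    #(B ⧸ (smulHom B n).range) ≤ #(A ⧸ (smulHom A n).range) :=
  mk_le_of_surjective (quotientSmulMap_surjective n hf)

theorem mk_quotient_smulHom_range_le_mul {z : A} (hf : Function.Surjective f)
    (hz : f.ker ≤ AddSubgroup.zmultiples z) (hn : 0 < n) :
    #(A ⧸ (smulHom A n).range) ≤ n * #(B ⧸ (smulHom B n).range) := by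
  have hnz : n • (z : A ⧸ (smulHom A n).range) = 0 := by
    rw [← QuotientAddGroup.mk_nsmul, QuotientAddGroup.eq_zero_iff]
    exact ⟨z, rfl⟩
  calc #(A ⧸ (smulHom A n).range)
      ≤ #(B ⧸ (smulHom B n).range) * #(quotientSmulMap f n).ker := mk_le_mk_mul_mk_ker _
    _ ≤ #(B ⧸ (smulHom B n).range) * n := by
        gcongr
        exact (mk_le_mk_of_subset (ker_quotientSmulMap_le n hf hz)).trans
          (mk_zmultiples_le_of_nsmul_eq_zero hn hnz)
    _ = n * #(B ⧸ (smulHom B n).range) := mul_comm _ _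

end QuotientSmul

theorem stmt_6_general (G : AddSubgroup ℝ)
    (hZ : ∀ k : ℤ, (k : ℝ) ∈ G) (n : ℕ) (hn : 2 ≤ n) :
    ∀ H : AddSubgroup (AddCircle (1:ℝ)),
      H = G.map (QuotientAddGroup.mk' (AddSubgroup.zmultiples (1:ℝ))) →
      Cardinal.mk (H ⧸ ((H.map (smulHom (AddCircle (1:ℝ)) n)).addSubgroupOf H))
          ≤ Cardinal.mk (G ⧸ ((G.map (smulHom ℝ n)).addSubgroupOf G)) ∧
      Cardinal.mk (G ⧸ ((G.map (smulHom ℝ n)).addSubgroupOf G))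
          ≤ n * Cardinal.mk (H ⧸ ((H.map (smulHom (AddCircle (1:ℝ)) n)).addSubgroupOf H)) := by
  rintro _ rfl
  have h1 : (1 : ℝ) ∈ G := by exact_mod_cast hZ 1
  set π := (QuotientAddGroup.mk' (AddSubgroup.zmultiples (1:ℝ))).addSubgroupMap G
  have hπ : Function.Surjective π := AddMonoidHom.addSubgroupMap_surjective _ G
  rw [AddSubgroup.map_smulHom_addSubgroupOf, AddSubgroup.map_smulHom_addSubgroupOf]
  exact ⟨mk_quotient_smulHom_range_le_of_surjective n hπ,
    mk_quotient_smulHom_range_le_mul n hπ (ker_addSubgroupMap_mk'_zmultiples_le G h1) (by omega)⟩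

/-- For a dense additive subgroup `G` of `ℝ` containing `ℤ`, with `𝔾 = G ∩ [0,1)`
realized as the image `H` of `G` in `ℝ/ℤ = AddCircle 1`, one has
`[𝔾 : n𝔾] ≤ [G : nG] ≤ n·[𝔾 : n𝔾]` as cardinals. -/
theorem stmt_6 (G : AddSubgroup ℝ) (hdense : Dense (G : Set ℝ))
    (hZ : ∀ k : ℤ, (k : ℝ) ∈ G) (n : ℕ) (hn : 2 ≤ n) :
    ∀ H : AddSubgroup (AddCircle (1:ℝ)),
      H = G.map (QuotientAddGroup.mk' (AddSubgroup.zmultiples (1:ℝ))) →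
      Cardinal.mk (H ⧸ ((H.map (smulHom (AddCircle (1:ℝ)) n)).addSubgroupOf H))
          ≤ Cardinal.mk (G ⧸ ((G.map (smulHom ℝ n)).addSubgroupOf G)) ∧
      Cardinal.mk (G ⧸ ((G.map (smulHom ℝ n)).addSubgroupOf G))
          ≤ n * Cardinal.mk (H ⧸ ((H.map (smulHom (AddCircle (1:ℝ)) n)).addSubgroupOf H)) :=
  stmt_6_general G hZ n hn
end

section
/- Let G be a dense additive subgroup of ℝ containing ℤ, 𝔾 = G ∩ [0,1) with addition modulo 1, and n ≥ 2 an integer. If 1/n ∈ 𝔾, then [𝔾 : n𝔾] = [G : nG]. -/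
section

variable {A B : Type*} [AddCommGroup A] [AddCommGroup B]

@[simp]
theorem smulHom_apply (n : ℕ) (a : A) : smulHom A n a = n • a := rfl

theorem AddSubgroup.map_smulHom_map (f : A →+ B) (G : AddSubgroup A) (n : ℕ) :
    (G.map (smulHom A n)).map f = (G.map f).map (smulHom B n) := by
  simp only [AddSubgroup.map_map]
  congr 1
  ext a
  simp

noncomputable def AddSubgroup.quotientSmulEquivMap (f : A →+ B) (G : AddSubgroup A) (n : ℕ)
    (hker : f.ker ≤ G.map (smulHom A n)) :
    G ⧸ (G.map (smulHom A n)).addSubgroupOf G ≃+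
      G.map f ⧸ ((G.map f).map (smulHom B n)).addSubgroupOf (G.map f) :=
  let q := (QuotientAddGroup.mk' _).comp (f.addSubgroupMap G)
  have hq : Function.Surjective q :=
    (QuotientAddGroup.mk'_surjective _).comp (f.addSubgroupMap_surjective G)
  have hker_q : q.ker = (G.map (smulHom A n)).addSubgroupOf G := by
    ext g
    simp only [q, AddMonoidHom.mem_ker, AddMonoidHom.comp_apply, QuotientAddGroup.mk'_apply,
      QuotientAddGroup.eq_zero_iff, AddSubgroup.mem_addSubgroupOf,
      AddMonoidHom.addSubgroupMap_apply_coe, ← AddSubgroup.map_smulHom_map]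
    constructor
    · rintro ⟨a, ha, hfa⟩
      have hdiff : (g : A) - a ∈ G.map (smulHom A n) :=
        hker (by simp [AddMonoidHom.mem_ker, hfa])
      simpa using AddSubgroup.add_mem _ hdiff ha
    · exact fun hg => ⟨g, hg, rfl⟩
  (QuotientAddGroup.quotientAddEquivOfEq hker_q.symm).trans
    (QuotientAddGroup.quotientKerEquivOfSurjective q hq)

end

theorem zmultiples_one_le_map_smulHom {G : AddSubgroup ℝ} {n : ℕ} (hn : n ≠ 0)
    (h1n : 1 / (n : ℝ) ∈ G) :
    AddSubgroup.zmultiples (1 : ℝ) ≤ G.map (smulHom ℝ n) := by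
  rw [AddSubgroup.zmultiples_le]
  exact ⟨1 / n, h1n, by simp [hn]⟩

/-- `𝔾 = G ∩ [0,1)` is realized as the image `H` of `G` in `ℝ/ℤ = AddCircle 1`. -/
theorem stmt_7_general (G : AddSubgroup ℝ) (n : ℕ) (hn : 2 ≤ n)
    (h1n : (1 / (n : ℝ)) ∈ G) :
    ∀ H : AddSubgroup (AddCircle (1:ℝ)),
      H = G.map (QuotientAddGroup.mk' (AddSubgroup.zmultiples (1:ℝ))) →
      Cardinal.mk (H ⧸ ((H.map (smulHom (AddCircle (1:ℝ)) n)).addSubgroupOf H))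
        = Cardinal.mk (G ⧸ ((G.map (smulHom ℝ n)).addSubgroupOf G)) := by
  rintro H rfl
  have hker : (QuotientAddGroup.mk' (AddSubgroup.zmultiples (1 : ℝ))).ker ≤
      G.map (smulHom ℝ n) := by
    rw [QuotientAddGroup.ker_mk']
    exact zmultiples_one_le_map_smulHom (by omega) h1n
  exact Cardinal.mk_congr (G.quotientSmulEquivMap _ n hker).toEquiv.symm

/-- If `1/n ∈ 𝔾` then `[𝔾 : n𝔾] = [G : nG]`, where `𝔾 = G ∩ [0,1)` is realized as the
image `H` of `G` in `ℝ/ℤ = AddCircle 1`. -/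
theorem stmt_7 (G : AddSubgroup ℝ) (hdense : Dense (G : Set ℝ))
    (hZ : ∀ k : ℤ, (k : ℝ) ∈ G) (n : ℕ) (hn : 2 ≤ n)
    (h1n : (1 / (n : ℝ)) ∈ G) :
    ∀ H : AddSubgroup (AddCircle (1:ℝ)),
      H = G.map (QuotientAddGroup.mk' (AddSubgroup.zmultiples (1:ℝ))) →
      Cardinal.mk (H ⧸ ((H.map (smulHom (AddCircle (1:ℝ)) n)).addSubgroupOf H))
        = Cardinal.mk (G ⧸ ((G.map (smulHom ℝ n)).addSubgroupOf G)) :=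
  stmt_7_general G n hn h1n
end

section
/- Let G be a dense additive subgroup of ℝ containing ℤ, 𝔾 = G ∩ [0,1) under addition modulo 1. If N is the set of positive integers n for which 𝔾 has no element of order n and N is nonempty, then the set D_N = {i/n : n ∈ N, 0 ≤ i ≤ n−1} is a divisible subgroup of ([0,1), +₁). -/
/-- `hasOrderExactly G n` : the group `𝔾 = G ∩ [0,1)` under addition modulo 1 has an
element of order exactly `n`. -/
def hasOrderExactly (G : AddSubgroup ℝ) (n : ℕ) : Prop :=
  ∃ g : ℝ, g ∈ G ∧ g ∈ Set.Ico (0:ℝ) 1 ∧ Int.fract ((n : ℝ) * g) = 0 ∧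
    ∀ k : ℕ, 1 ≤ k → k < n → Int.fract ((k : ℝ) * g) ≠ 0

/-!
If `g` has order `n * m` in `𝔾`, then `m • g = fract (m * g)` has order `n`; so the set `N` of
orders that do not occur is closed under multiplication by positive integers. Every fraction
`i / n`, `n ∈ N`, can therefore be rewritten over any common multiple of denominators, which
gives closure under `+₁` and `-₁`, and `i / n = m • (i / (n * m))` gives divisibility.
-/

theorem Int.fract_natCast_mul_fract {R : Type*} [Ring R] [LinearOrder R] [IsStrictOrderedRing R]
    [FloorRing R] (k : ℕ) (a : R) :
    Int.fract ((k : R) * Int.fract a) = Int.fract ((k : R) * a) := by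
  rw [← Int.self_sub_floor a, mul_sub, ← Int.cast_natCast, ← Int.cast_mul, Int.fract_sub_intCast,
    Int.cast_natCast]

theorem AddSubgroup.fract_mem {G : AddSubgroup ℝ} (hZ : ∀ k : ℤ, (k : ℝ) ∈ G) {x : ℝ}
    (hx : x ∈ G) : Int.fract x ∈ G :=
  G.sub_mem hx (hZ _)

theorem hasOrderExactly.of_mul {G : AddSubgroup ℝ} (hZ : ∀ k : ℤ, (k : ℝ) ∈ G) {n m : ℕ}
    (hm : 0 < m) (h : hasOrderExactly G (n * m)) : hasOrderExactly G n := by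
  obtain ⟨g, hgG, -, hfr, hlt⟩ := h
  have hmul (k : ℕ) : Int.fract ((k : ℝ) * Int.fract ((m : ℝ) * g)) =
      Int.fract (((k * m : ℕ) : ℝ) * g) := by
    rw [Int.fract_natCast_mul_fract, Nat.cast_mul, mul_assoc]
  refine ⟨Int.fract ((m : ℝ) * g), ?_, ⟨Int.fract_nonneg _, Int.fract_lt_one _⟩, ?_, ?_⟩
  · exact AddSubgroup.fract_mem hZ (by simpa [nsmul_eq_mul] using G.nsmul_mem hgG m)
  · rw [hmul, hfr]
  · intro k hk hkn
    rw [hmul]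
    exact hlt (k * m) (Nat.one_le_iff_ne_zero.mpr (by positivity))
      ((Nat.mul_lt_mul_right hm).mpr hkn)

def fractionsOver (N : Set ℕ) : Set ℝ :=
  {x : ℝ | ∃ n ∈ N, ∃ i : ℕ, i ≤ n - 1 ∧ x = (i : ℝ) / n}

section fractionsOver

variable {N : Set ℕ}

theorem zero_mem_fractionsOver (hne : N.Nonempty) : (0 : ℝ) ∈ fractionsOver N := by
  obtain ⟨n, hn⟩ := hne
  exact ⟨n, hn, 0, Nat.zero_le _, by simp⟩

theorem fract_natCast_div_mem_fractionsOver (hpos : ∀ n ∈ N, 0 < n) {n : ℕ} (hn : n ∈ N)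
    (k : ℕ) : Int.fract ((k : ℝ) / n) ∈ fractionsOver N := by
  rw [Int.fract_div_natCast_eq_div_natCast_mod]
  exact ⟨n, hn, k % n, Nat.le_pred_of_lt (Nat.mod_lt _ (hpos n hn)), rfl⟩

theorem fract_add_mem_fractionsOver (hpos : ∀ n ∈ N, 0 < n)
    (hmul : ∀ n ∈ N, ∀ m : ℕ, 0 < m → n * m ∈ N) {x y : ℝ} (hx : x ∈ fractionsOver N)
    (hy : y ∈ fractionsOver N) : Int.fract (x + y) ∈ fractionsOver N := by
  obtain ⟨n, hn, i, -, rfl⟩ := hx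
  obtain ⟨m, hm, j, -, rfl⟩ := hy
  have hn0 : (n : ℝ) ≠ 0 := by exact_mod_cast (hpos n hn).ne'
  have hm0 : (m : ℝ) ≠ 0 := by exact_mod_cast (hpos m hm).ne'
  have hsum : (i : ℝ) / n + j / m = ((i * m + j * n : ℕ) : ℝ) / ((n * m : ℕ) : ℝ) := by
    push_cast
    field_simp
  rw [hsum]
  exact fract_natCast_div_mem_fractionsOver hpos (hmul n hn m (hpos m hm)) _

theorem fract_neg_mem_fractionsOver (hpos : ∀ n ∈ N, 0 < n) {x : ℝ}
    (hx : x ∈ fractionsOver N) : Int.fract (-x) ∈ fractionsOver N := by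
  obtain ⟨n, hn, i, -, rfl⟩ := hx
  have hn1 : 1 ≤ n := hpos n hn
  have hn0 : (n : ℝ) ≠ 0 := by positivity
  have hneg : -((i : ℝ) / n) = (((n - 1) * i : ℕ) : ℝ) / n - i := by
    rw [Nat.cast_mul, Nat.cast_sub hn1]
    field_simp
    ring
  rw [hneg, Int.fract_sub_natCast]
  exact fract_natCast_div_mem_fractionsOver hpos hn _

theorem exists_mem_fractionsOver_fract_mul_eq (hpos : ∀ n ∈ N, 0 < n)
    (hmul : ∀ n ∈ N, ∀ m : ℕ, 0 < m → n * m ∈ N) {d : ℝ} (hd : d ∈ fractionsOver N) {m : ℕ}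
    (hm : 0 < m) : ∃ e ∈ fractionsOver N, Int.fract ((m : ℝ) * e) = d := by
  obtain ⟨n, hn, i, hi, rfl⟩ := hd
  have hn0 : 0 < n := hpos n hn
  refine ⟨(i : ℝ) / ((n * m : ℕ) : ℝ), ⟨n * m, hmul n hn m hm, i, ?_, rfl⟩, ?_⟩
  · exact hi.trans (Nat.sub_le_sub_right (Nat.le_mul_of_pos_right n hm) 1)
  · have hm0 : (m : ℝ) ≠ 0 := by positivity
    have hdiv : (m : ℝ) * ((i : ℝ) / ((n * m : ℕ) : ℝ)) = (i : ℝ) / n := by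
      push_cast
      field_simp
    have hin : (i : ℝ) < n := by exact_mod_cast (show i < n by omega)
    rw [hdiv, Int.fract_eq_self]
    exact ⟨by positivity, (div_lt_one (by positivity)).mpr hin⟩

end fractionsOver

theorem stmt_9_general (G : AddSubgroup ℝ)
    (hZ : ∀ k : ℤ, (k : ℝ) ∈ G)
    (N : Set ℕ) (hN : N = {n : ℕ | 0 < n ∧ ¬ hasOrderExactly G n}) (hne : N.Nonempty)
    (D : Set ℝ) (hD : D = {x : ℝ | ∃ n ∈ N, ∃ i : ℕ, i ≤ n - 1 ∧ x = (i : ℝ) / n}) :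
    (0 : ℝ) ∈ D ∧
    (∀ x ∈ D, ∀ y ∈ D, Int.fract (x + y) ∈ D) ∧
    (∀ x ∈ D, Int.fract (-x) ∈ D) ∧
    (∀ d ∈ D, ∀ m : ℕ, 0 < m → ∃ e ∈ D, Int.fract ((m : ℝ) * e) = d) := by
  have hpos : ∀ n ∈ N, 0 < n := by
    rw [hN]
    exact fun n hn ↦ hn.1
  have hmul : ∀ n ∈ N, ∀ m : ℕ, 0 < m → n * m ∈ N := by
    rw [hN]
    exact fun n hn m hm ↦ ⟨Nat.mul_pos hn.1 hm, fun h ↦ hn.2 (h.of_mul hZ hm)⟩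
  change D = fractionsOver N at hD
  subst hD
  exact ⟨zero_mem_fractionsOver hne,
    fun x hx y hy ↦ fract_add_mem_fractionsOver hpos hmul hx hy,
    fun x hx ↦ fract_neg_mem_fractionsOver hpos hx,
    fun d hd m hm ↦ exists_mem_fractionsOver_fract_mul_eq hpos hmul hd hm⟩

/-- If `N` (the set of positive integers `n` with no element of order `n` in `𝔾`) is
nonempty, then `D_N = {i/n : n ∈ N, 0 ≤ i ≤ n-1}` is a divisible subgroup of `([0,1), +₁)`:
it contains `0`, is closed under addition mod 1 and negation mod 1, and is divisible. -/
theorem stmt_9 (G : AddSubgroup ℝ) (hdense : Dense (G : Set ℝ))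
    (hZ : ∀ k : ℤ, (k : ℝ) ∈ G)
    (N : Set ℕ) (hN : N = {n : ℕ | 0 < n ∧ ¬ hasOrderExactly G n}) (hne : N.Nonempty)
    (D : Set ℝ) (hD : D = {x : ℝ | ∃ n ∈ N, ∃ i : ℕ, i ≤ n - 1 ∧ x = (i : ℝ) / n}) :
    (0 : ℝ) ∈ D ∧
    (∀ x ∈ D, ∀ y ∈ D, Int.fract (x + y) ∈ D) ∧
    (∀ x ∈ D, Int.fract (-x) ∈ D) ∧
    (∀ d ∈ D, ∀ m : ℕ, 0 < m → ∃ e ∈ D, Int.fract ((m : ℝ) * e) = d) :=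
  stmt_9_general G hZ N hN hne D hD
end

section
/- Let G be a totally ordered abelian group with nonnegative cone S, and n ≥ 2. Suppose x₁, …, x_k ∈ S are such that every element of S lies in some coset xᵢ + nS, and for i ≠ j the equation xᵢ + n s₁ = xⱼ + n s₂ has no solution s₁, s₂ ∈ S. Then [G : nG] ≤ k and xᵢ − xⱼ ∉ nG for i ≠ j, so [G : nG] = k. -/
/-- If `x₁, …, x_k` are nonnegative elements of a totally ordered abelian group `G` whose
cosets modulo `n·S` cover the nonnegative cone `S` and are pairwise disjoint
(`xᵢ + n s₁ = xⱼ + n s₂` has no solution in `S` for `i ≠ j`), then `xᵢ - xⱼ ∉ nG` for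
`i ≠ j` and `[G : nG] = k`. -/
theorem stmt_16 {G : Type*} [AddCommGroup G] [LinearOrder G] [IsOrderedAddMonoid G] (n : ℕ) (hn : 2 ≤ n)
    (k : ℕ) (x : Fin k → G) (hx : ∀ i, 0 ≤ x i)
    (hcover : ∀ s : G, 0 ≤ s → ∃ i, ∃ t : G, 0 ≤ t ∧ s = x i + n • t)
    (hsep : ∀ i j, i ≠ j →
      ¬ ∃ s₁ s₂ : G, 0 ≤ s₁ ∧ 0 ≤ s₂ ∧ x i + n • s₁ = x j + n • s₂) :
    (∀ i j, i ≠ j → x i - x j ∉ (smulHom G n).range) ∧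
    (smulHom G n).range.index = k := by
  set H := (smulHom G n).range with hH
  have hsep' : ∀ i j, i ≠ j → x i - x j ∉ H := by
    rintro i j hij ⟨g, hg⟩
    have hg' : n • g = x i - x j := hg
    apply hsep i j hij
    refine ⟨max 0 (-g), g + max 0 (-g), le_max_left _ _, ?_, ?_⟩
    · have h1 : -g ≤ max 0 (-g) := le_max_right _ _
      have := sub_nonneg.mpr h1
      rwa [sub_neg_eq_add, add_comm] at this
    · rw [smul_add, hg']; abel
  refine ⟨hsep', ?_⟩
  have hbij : Function.Bijective (fun i => (QuotientAddGroup.mk (x i) : G ⧸ H)) := by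
    constructor
    · intro i j hij
      by_contra hne
      apply hsep' i j hne
      have h1 : -x i + x j ∈ H := (QuotientAddGroup.eq).mp hij
      have h2 : -(-x i + x j) ∈ H := neg_mem h1
      have h3 : -(-x i + x j) = x i - x j := by abel
      rwa [h3] at h2
    · intro q
      obtain ⟨g, rfl⟩ := QuotientAddGroup.mk_surjective q
      set t := max 0 (-g) with ht_def
      have ht : 0 ≤ t := le_max_left _ _
      have htg : -g ≤ t := le_max_right _ _
      have ht2 : t ≤ n • t := by
        calc t = 1 • t := (one_nsmul t).symm
          _ ≤ n • t := nsmul_le_nsmul_left ht (by omega)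
      have hs : 0 ≤ g + n • t := by
        have h1 : -g ≤ n • t := le_trans htg ht2
        have := sub_nonneg.mpr h1
        rwa [sub_neg_eq_add, add_comm] at this
      obtain ⟨i, u, hu, hequ⟩ := hcover (g + n • t) hs
      refine ⟨i, ?_⟩
      rw [QuotientAddGroup.eq]
      refine ⟨u - t, ?_⟩
      show n • (u - t) = -x i + g
      have hg2 : g = x i + n • u - n • t := by rw [← hequ]; abel
      rw [smul_sub, hg2]; abel
  have e := Equiv.ofBijective _ hbij
  rw [AddSubgroup.index, ← Nat.card_congr e, Nat.card_eq_fintype_card, Fintype.card_fin]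
end
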